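/- Let x ∈ {0,1}^N with N = 2^n, and let {(i_k, j_k)}_{k=1}^{N/4} be disjoint pairs of distinct indices in {1,…,N}, w ∈ {0,1}^{N/4}, and suppose there is b ∈ {0,1} with w_k ⊕ x_{i_k} ⊕ x_{j_k} = b for all k. Let |ψ⟩ = N^{−1/2} Σᵢ (−1)^{xᵢ} |i⟩, let P be the orthogonal projector onto the span of N/4 standard basis vectors |i⟩ with i not appearing in any pair, and let Π = P + Σ_k (1/2)(|i_k⟩ − (−1)^{w_k}|j_k⟩)(⟨i_k| − (−1)^{w_k}⟨j_k|). Then ⟨ψ|Π|ψ⟩ = (1 + 2b)/4. -/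

import Mathlib

/-!
The sign vector `ψ` is real with entries `±N^{-1/2}`, so
`⟨ψ|Π|ψ⟩ = Σ_k ψ(S k)² + ½ Σ_k (ψ(i_k) − (−1)^{w_k} ψ(j_k))²`.
Each of the `N/4` terms of the first sum is `1/N`. The `k`-th term of the second is
`(2N)⁻¹ ((−1)^{x_{i_k}} − (−1)^{w_k ⊕ x_{j_k}})²`, which is `2/N` if
`w_k ⊕ x_{i_k} ⊕ x_{j_k} = 1` and `0` otherwise, i.e. `2b/N`. Altogether `⟨ψ|Π|ψ⟩ = 1/4 + b/2`.
-/

open Matrix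
open scoped Classical

noncomputable section

/-- Sign vector `ψ = N^{-1/2} Σᵢ (−1)^{xᵢ} |i⟩`. -/
def psiVec (N : ℕ) (x : Fin N → Bool) : Fin N → ℂ :=
  fun a => (if x a then (-1 : ℂ) else 1) / Real.sqrt N

/-- The (unnormalized) vector `|i_k⟩ − (−1)^{w_k}|j_k⟩`. -/
def pairVec {N M : ℕ} (i j : Fin M → Fin N) (w : Fin M → Bool) (k : Fin M) :
    Fin N → ℂ :=
  fun a => (if a = i k then (1 : ℂ) else 0) -
    (if w k then (-1 : ℂ) else 1) * (if a = j k then (1 : ℂ) else 0)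

/-- Projector `P` onto the span of the standard basis vectors `|S k⟩`. -/
def basisProj {N M : ℕ} (S : Fin M → Fin N) : Matrix (Fin N) (Fin N) ℂ :=
  Matrix.of fun a b => if a = b ∧ (∃ k, S k = a) then (1 : ℂ) else 0

/-- The projector `Π = P + Σ_k (1/2)(|i_k⟩−(−1)^{w_k}|j_k⟩)(⟨i_k|−(−1)^{w_k}⟨j_k|)`. -/
def matchingProj {N M : ℕ} (i j : Fin M → Fin N) (w : Fin M → Bool)
    (S : Fin M → Fin N) : Matrix (Fin N) (Fin N) ℂ :=
  basisProj S + ∑ k, (1/2 : ℂ) •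
    Matrix.of (fun a b => pairVec i j w k a * (starRingEnd ℂ) (pairVec i j w k b))

lemma dotProduct_vecMulVec_mulVec {m : Type*} [Fintype m] {R : Type*} [CommSemiring R]
    (u v w : m → R) : u ⬝ᵥ (vecMulVec v w *ᵥ u) = (u ⬝ᵥ v) * (w ⬝ᵥ u) := by
  rw [vecMulVec_mulVec, op_smul_eq_smul, dotProduct_smul, smul_eq_mul, mul_comm]

lemma basisProj_mulVec {N M : ℕ} (S : Fin M → Fin N) (ψ : Fin N → ℂ) (a : Fin N) :
    (basisProj S *ᵥ ψ) a = if ∃ k, S k = a then ψ a else 0 := by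
  simp only [basisProj, mulVec, dotProduct, of_apply, ite_mul, one_mul, zero_mul, ite_and,
    Finset.sum_ite_eq, Finset.mem_univ, if_true]

lemma dotProduct_basisProj_mulVec {N M : ℕ} {S : Fin M → Fin N} (hS : Function.Injective S)
    (u ψ : Fin N → ℂ) : u ⬝ᵥ (basisProj S *ᵥ ψ) = ∑ k, u (S k) * ψ (S k) := by
  have hrange : Finset.univ.filter (fun a => ∃ k, S k = a) = Finset.univ.image S := by
    ext a; simp
  simp only [dotProduct, basisProj_mulVec, mul_ite, mul_zero]
  rw [← Finset.sum_filter, hrange, Finset.sum_image hS.injOn]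

lemma of_pairVec_mul_star_eq_vecMulVec {N M : ℕ} (i j : Fin M → Fin N) (w : Fin M → Bool)
    (k : Fin M) :
    (of fun a b => pairVec i j w k a * (starRingEnd ℂ) (pairVec i j w k b)) =
      vecMulVec (pairVec i j w k) (pairVec i j w k) := by
  ext a b
  simp only [of_apply, vecMulVec_apply, pairVec, map_sub, map_mul, apply_ite (starRingEnd ℂ),
    map_one, map_zero, map_neg]

lemma dotProduct_matchingProj_mulVec {N M : ℕ} (i j : Fin M → Fin N) (w : Fin M → Bool)
    {S : Fin M → Fin N} (hS : Function.Injective S) (ψ : Fin N → ℂ) :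
    ψ ⬝ᵥ (matchingProj i j w S *ᵥ ψ) =
      ∑ k, ψ (S k) ^ 2 + ∑ k, (ψ ⬝ᵥ pairVec i j w k) ^ 2 / 2 := by
  simp only [matchingProj, add_mulVec, dotProduct_add, sum_mulVec, dotProduct_sum, smul_mulVec,
    dotProduct_smul, of_pairVec_mul_star_eq_vecMulVec, dotProduct_vecMulVec_mulVec,
    dotProduct_basisProj_mulVec hS, smul_eq_mul, dotProduct_comm (pairVec i j w _) ψ,
    ← sq, one_div_mul_eq_div]

lemma dotProduct_pairVec {N M : ℕ} (i j : Fin M → Fin N) (w : Fin M → Bool) (k : Fin M)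
    (ψ : Fin N → ℂ) :
    ψ ⬝ᵥ pairVec i j w k = ψ (i k) - (if w k then (-1 : ℂ) else 1) * ψ (j k) := by
  simp [dotProduct, pairVec, mul_sub, Finset.sum_sub_distrib]

lemma star_psiVec (N : ℕ) (x : Fin N → Bool) : star (psiVec N x) = psiVec N x := by
  ext a
  simp [psiVec, Complex.conj_ofReal, apply_ite (starRingEnd ℂ)]

lemma psiVec_sq {N : ℕ} (x : Fin N → Bool) (a : Fin N) : psiVec N x a ^ 2 = 1 / (N : ℂ) := by
  have hN : (0 : ℝ) ≤ N := N.cast_nonneg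
  rw [psiVec, div_pow, ← Complex.ofReal_pow, Real.sq_sqrt hN]
  split_ifs <;> simp

lemma psiVec_sub_sq {N : ℕ} (x : Fin N → Bool) (p q : Fin N) (s : Bool) :
    (psiVec N x p - (if s then (-1 : ℂ) else 1) * psiVec N x q) ^ 2 =
      if xor s (xor (x p) (x q)) then 4 / (N : ℂ) else 0 := by
  have hN : (0 : ℝ) ≤ N := N.cast_nonneg
  rw [psiVec, psiVec, mul_div_assoc', div_sub_div_same, div_pow, ← Complex.ofReal_pow,
    Real.sq_sqrt hN]
  cases s <;> cases x p <;> cases x q <;> norm_num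

theorem matching_expectation_general (n : ℕ) (hn : 2 ≤ n)
    (x : Fin (2^n) → Bool)
    (i j : Fin (2^(n-2)) → Fin (2^n))
    (w : Fin (2^(n-2)) → Bool)
    (S : Fin (2^(n-2)) → Fin (2^n))
    (hS : Function.Injective S)
    (b : Bool)
    (hmatch : ∀ k, xor (w k) (xor (x (i k)) (x (j k))) = b) :
    star (psiVec (2^n) x) ⬝ᵥ (matchingProj i j w S *ᵥ psiVec (2^n) x) =
      (1 + 2 * (if b then (1 : ℂ) else 0)) / 4 := by
  rw [star_psiVec, dotProduct_matchingProj_mulVec i j w hS]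
  simp only [psiVec_sq, dotProduct_pairVec, psiVec_sub_sq, hmatch, Finset.sum_const,
    Finset.card_univ, Fintype.card_fin, nsmul_eq_mul]
  have hN : ((2 ^ n : ℕ) : ℂ) = 4 * ((2 ^ (n - 2) : ℕ) : ℂ) := by
    rw [← pow_sub_mul_pow 2 hn]
    push_cast
    ring
  have hM : ((2 ^ (n - 2) : ℕ) : ℂ) ≠ 0 := Nat.cast_ne_zero.mpr (by positivity)
  rw [hN]
  cases b <;> simp only [Bool.false_eq_true, if_true, if_false] <;> field_simp <;> ring

/-- For the partial-matching instance with promise bit `b`,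
`⟨ψ|Π|ψ⟩ = (1 + 2b)/4`. -/
theorem matching_expectation (n : ℕ) (hn : 2 ≤ n)
    (x : Fin (2^n) → Bool)
    (i j : Fin (2^(n-2)) → Fin (2^n))
    (hpairs : Function.Injective (Sum.elim i j))
    (w : Fin (2^(n-2)) → Bool)
    (S : Fin (2^(n-2)) → Fin (2^n))
    (hS : Function.Injective S)
    (hSdisj : ∀ k l, S k ≠ i l ∧ S k ≠ j l)
    (b : Bool)
    (hmatch : ∀ k, xor (w k) (xor (x (i k)) (x (j k))) = b) :
    star (psiVec (2^n) x) ⬝ᵥ (matchingProj i j w S *ᵥ psiVec (2^n) x) =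
      (1 + 2 * (if b then (1 : ℂ) else 0)) / 4 :=
  matching_expectation_general n hn x i j w S hS b hmatch

end
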